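/- Faithful embedding of the classical modal logic K into KbiG on crisp frames: for a classical modal formula φ (built from variables using 𝟎, ∧, ∨, →, □, ◇), let φ^∼ be the biL_{□,◇} formula obtained from φ by replacing every occurrence of each propositional variable p by ∼∼p. Then for every crisp frame F: F ⊨_K φ (φ is true under the standard two-valued Kripke semantics at every world of every classical model on F) if and only if F ⊨_{KbiG} φ^∼. -/

import Mathlib

/- Truth values: the real unit interval [0,1] with its complete lattice structure
   (so `sInf ∅ = 1` and `sSup ∅ = 0`). -/
instance : Fact ((0:ℝ) ≤ 1) := ⟨zero_le_one⟩

abbrev TV : Type := unitInterval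

/-- Gödel implication: `a →G b = 1` if `a ≤ b`, else `b`. -/
noncomputable def gimp (a b : TV) : TV := if a ≤ b then 1 else b

/-- Gödel coimplication: `a ⧀G b = 0` if `a ≤ b`, else `a`. -/
noncomputable def gcoimp (a b : TV) : TV := if a ≤ b then 0 else a

/-- ¬-free formulas: the language `biL_{□,◇}` over the countable variable set `ℕ`. -/
inductive FormulaB : Type
  | var : ℕ → FormulaB
  | and : FormulaB → FormulaB → FormulaB
  | or : FormulaB → FormulaB → FormulaB
  | imp : FormulaB → FormulaB → FormulaB
  | coimp : FormulaB → FormulaB → FormulaB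
  | box : FormulaB → FormulaB
  | dia : FormulaB → FormulaB

/-- KbiG valuation on a crisp frame `(W, R)` (`inf ∅ = 1`, `sup ∅ = 0`). -/
noncomputable def bval {W : Type} (R : W → W → Prop) (v : ℕ → W → TV) :
    FormulaB → W → TV
  | .var p, w => v p w
  | .and φ ψ, w => bval R v φ w ⊓ bval R v ψ w
  | .or φ ψ, w => bval R v φ w ⊔ bval R v ψ w
  | .imp φ ψ, w => gimp (bval R v φ w) (bval R v ψ w)
  | .coimp φ ψ, w => gcoimp (bval R v φ w) (bval R v ψ w)
  | .box φ, w => sInf ((fun w' => bval R v φ w') '' {w' | R w w'})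
  | .dia φ, w => sSup ((fun w' => bval R v φ w') '' {w' | R w w'})

/-- `𝟏 := p → p`. -/
def bone : FormulaB := .imp (.var 0) (.var 0)

/-- `𝟎 := p ⧀ p`. -/
def bzero : FormulaB := .coimp (.var 0) (.var 0)

/-- Gödel negation `∼φ := φ → 𝟎`. -/
def bnegG (φ : FormulaB) : FormulaB := .imp φ bzero

/-- Baaz delta `Δτ := ∼(𝟏 ⧀ τ)`. -/
def bDelta (τ : FormulaB) : FormulaB := bnegG (.coimp bone τ)

/-- The formula `𝟏 ⧀ ◇((p ⧀ q) ∧ q)` with `p := var 0`, `q := var 1`. -/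
def phiFin : FormulaB := .coimp bone (.dia (.and (.coimp (.var 0) (.var 1)) (.var 1)))

/-- Classical modal formulas: built from variables and `𝟎` using `∧, ∨, →, □, ◇`. -/
inductive CForm : Type
  | fls : CForm
  | var : ℕ → CForm
  | and : CForm → CForm → CForm
  | or : CForm → CForm → CForm
  | imp : CForm → CForm → CForm
  | box : CForm → CForm
  | dia : CForm → CForm

/-- Standard two-valued Kripke semantics on a crisp frame `(W, R)`. -/
def cval {W : Type} (R : W → W → Prop) (v : ℕ → W → Prop) : CForm → W → Prop
  | .fls, _ => False
  | .var p, w => v p w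
  | .and φ ψ, w => cval R v φ w ∧ cval R v ψ w
  | .or φ ψ, w => cval R v φ w ∨ cval R v ψ w
  | .imp φ ψ, w => cval R v φ w → cval R v ψ w
  | .box φ, w => ∀ w', R w w' → cval R v φ w'
  | .dia φ, w => ∃ w', R w w' ∧ cval R v φ w'

/-- The translation `φ ↦ φ^∼` replacing every variable `p` by `∼∼p`. -/
def CForm.trans : CForm → FormulaB
  | .fls => bzero
  | .var p => bnegG (bnegG (.var p))
  | .and φ ψ => .and φ.trans ψ.trans
  | .or φ ψ => .or φ.trans ψ.trans
  | .imp φ ψ => .imp φ.trans ψ.trans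
  | .box φ => .box φ.trans
  | .dia φ => .dia φ.trans

/-! On every KbiG model the translation `φ^∼` is crisp: `∼∼` sends each value `a` to `1` if `a > 0`
and to `0` otherwise, and the bi-Gödel operations and the modalities restricted to `{0, 1}` are the
classical ones. So `φ^∼` takes value `1` exactly where `φ` holds classically under the valuation
`p ↦ (v p > 0)`; conversely every classical valuation arises this way from a `{0, 1}`-valued one. -/

section TopBot

variable {α β : Type*} [CompleteLattice α]

open Classical in
lemma sInf_image_ite_top_bot (p : β → Prop) (s : Set β) :
    sInf ((fun x => if p x then (⊤ : α) else ⊥) '' s) = if ∀ x ∈ s, p x then ⊤ else ⊥ := by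
  split_ifs with h
  · exact sInf_eq_top.2 (by rintro _ ⟨x, hx, rfl⟩; simp [h x hx])
  · push Not at h
    obtain ⟨x, hx, hpx⟩ := h
    exact bot_unique (sInf_le_of_le ⟨x, hx, rfl⟩ (by simp [hpx]))

open Classical in
lemma sSup_image_ite_top_bot (p : β → Prop) (s : Set β) :
    sSup ((fun x => if p x then (⊤ : α) else ⊥) '' s) = if ∃ x ∈ s, p x then ⊤ else ⊥ := by
  split_ifs with h
  · obtain ⟨x, hx, hpx⟩ := h
    exact top_unique (le_sSup_of_le ⟨x, hx, rfl⟩ (by simp [hpx]))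
  · push Not at h
    exact sSup_eq_bot.2 (by rintro _ ⟨x, hx, rfl⟩; simp [h x hx])

end TopBot

lemma gimp_zero (a : TV) : gimp a 0 = if a = 0 then 1 else 0 := by
  simp [gimp]

section Semantics

variable {W : Type} (R : W → W → Prop)

@[simp]
lemma bval_bzero (v : ℕ → W → TV) (w : W) : bval R v bzero w = 0 := by
  simp [bzero, bval, gcoimp]

lemma bval_bnegG (v : ℕ → W → TV) (φ : FormulaB) (w : W) :
    bval R v (bnegG φ) w = if bval R v φ w = 0 then 1 else 0 := by
  rw [bnegG, bval, bval_bzero, gimp_zero]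

open Classical in
theorem bval_trans (v : ℕ → W → TV) (φ : CForm) (w : W) :
    bval R v φ.trans w = if cval R (fun p w => v p w ≠ 0) φ w then 1 else 0 := by
  induction φ generalizing w with
  | fls => simp [CForm.trans, cval]
  | var p =>
    simp only [CForm.trans, bval_bnegG, bval, cval]
    by_cases v p w = 0 <;> simp_all
  | and φ ψ ihφ ihψ | or φ ψ ihφ ihψ | imp φ ψ ihφ ihψ =>
    simp only [CForm.trans, bval, cval, ihφ, ihψ]
    split_ifs <;> simp_all [gimp]
  | box φ ih =>
    simp only [CForm.trans, bval, ih]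
    exact sInf_image_ite_top_bot _ _
  | dia φ ih =>
    simp only [CForm.trans, bval, ih]
    exact sSup_image_ite_top_bot _ _

end Semantics

theorem stmt18_general {W : Type} (R : W → W → Prop) (φ : CForm) :
    (∀ (v : ℕ → W → Prop) (w : W), cval R v φ w) ↔
    (∀ (v : ℕ → W → TV) (w : W), bval R v φ.trans w = 1) := by
  classical
  refine ⟨fun h v w => by rw [bval_trans, if_pos (h _ w)], fun h v w => ?_⟩
  have hcrisp : (fun p w => (if v p w then 1 else 0 : TV) ≠ 0) = v := by
    ext p w
    by_cases v p w <;> simp_all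
  simpa [bval_trans, hcrisp] using h (fun p w => if v p w then 1 else 0) w

/-- faithful embedding of classical `K` into KbiG over crisp frames:
`F ⊨_K φ` iff `F ⊨_{KbiG} φ^∼`, where `φ^∼` replaces each variable `p` by `∼∼p`. -/
theorem stmt18 {W : Type} [Nonempty W] (R : W → W → Prop) (φ : CForm) :
    (∀ (v : ℕ → W → Prop) (w : W), cval R v φ w) ↔
    (∀ (v : ℕ → W → TV) (w : W), bval R v φ.trans w = 1) :=
  stmt18_general R φ
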